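/- Let G be a finite graph, 𝒜 its independent sets, and for ρ > 0 let π_ρ(A) = ρ^{|A|}/∑_{B∈𝒜} ρ^{|B|}. For each vertex i define x_i(ρ) = ∑_{A ∈ 𝒜 : i ∈ A ∪ U_A} π_ρ(A), where U_A is the set of vertices not in A and not adjacent to any vertex of A. Then as ρ → ∞, x_i(ρ) → η_i(G)/η(G), where η(G) is the number of maximum independent sets and η_i(G) the number of maximum independent sets containing i. -/

import Mathlib

open Finset

variable {V : Type*} [Fintype V] [DecidableEq V]

/-- `A` is an independent set of vertices of `G`. -/
def IsIndep (G : SimpleGraph V) (A : Finset V) : Prop :=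
  ∀ i ∈ A, ∀ j ∈ A, ¬ G.Adj i j

instance (G : SimpleGraph V) [DecidableRel G.Adj] : DecidablePred (IsIndep G) := fun A =>
  inferInstanceAs (Decidable (∀ i ∈ A, ∀ j ∈ A, ¬ G.Adj i j))

/-- the collection of all independent sets of `G`. -/
def indepSets (G : SimpleGraph V) [DecidableRel G.Adj] : Finset (Finset V) :=
  univ.filter (IsIndep G)

/-- the independence number of `G`. -/
def indepNum (G : SimpleGraph V) [DecidableRel G.Adj] : ℕ :=
  (indepSets G).sup Finset.card

/-- the collection of maximum independent sets of `G`. -/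
def maxIndepSets (G : SimpleGraph V) [DecidableRel G.Adj] : Finset (Finset V) :=
  (indepSets G).filter (fun A => A.card = indepNum G)

/-- `η(G)`: the number of maximum independent sets of `G`. -/
def eta (G : SimpleGraph V) [DecidableRel G.Adj] : ℕ := (maxIndepSets G).card

/-- `η_i(G)`: the number of maximum independent sets of `G` containing `i`. -/
def etaV (G : SimpleGraph V) [DecidableRel G.Adj] (i : V) : ℕ :=
  ((maxIndepSets G).filter (fun A => i ∈ A)).card

/-- `U_A`: the vertices outside `A` with no neighbor in `A`. -/
def backoffSet (G : SimpleGraph V) [DecidableRel G.Adj] (A : Finset V) : Finset V :=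
  univ.filter (fun j => j ∉ A ∧ ∀ k ∈ A, ¬ G.Adj j k)

/-- the stationary probability of independent set `A` under uniform access intensity `ρ`. -/
noncomputable def piU (G : SimpleGraph V) [DecidableRel G.Adj] (ρ : ℝ) (A : Finset V) : ℝ :=
  ρ ^ A.card / ∑ B ∈ indepSets G, ρ ^ B.card

/-! For large `ρ` the weights `ρ ^ |A|` are dominated by those of the maximum independent sets,
all equal to `ρ ^ α(G)`. A maximum independent set blocks every vertex outside it, since otherwise
the vertex could be added to it; so on maximum sets, "`i` is not blocked" just means `i ∈ A`. -/

section Asymptotics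

variable {ι : Type*} (d : ι → ℕ) (n : ℕ)

theorem tendsto_sum_pow_div_pow_atTop {T : Finset ι} (hT : ∀ a ∈ T, d a ≤ n) :
    Filter.Tendsto (fun ρ : ℝ => (∑ a ∈ T, ρ ^ d a) / ρ ^ n) Filter.atTop
      (nhds (#{a ∈ T | d a = n} : ℝ)) := by
  simp_rw [Finset.sum_div, Finset.natCast_card_filter]
  refine tendsto_finsetSum _ fun a ha => ?_
  rcases (hT a ha).eq_or_lt with hda | hda
  · rw [if_pos hda, hda]
    refine tendsto_const_nhds.congr' ?_
    filter_upwards [Filter.eventually_gt_atTop (0 : ℝ)] with ρ hρ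
    exact (div_self (pow_pos hρ n).ne').symm
  · rw [if_neg hda.ne]
    exact tendsto_pow_div_pow_atTop_zero hda

theorem tendsto_sum_pow_div_sum_pow_atTop {S T : Finset ι} (hS : ∀ a ∈ S, d a ≤ n)
    (hT : ∀ a ∈ T, d a ≤ n) (hTn : ∃ a ∈ T, d a = n) :
    Filter.Tendsto (fun ρ : ℝ => (∑ a ∈ S, ρ ^ d a) / ∑ a ∈ T, ρ ^ d a) Filter.atTop
      (nhds ((#{a ∈ S | d a = n} : ℝ) / #{a ∈ T | d a = n})) := by
  have hTn' : (#{a ∈ T | d a = n} : ℝ) ≠ 0 := by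
    obtain ⟨a, ha, hda⟩ := hTn
    exact_mod_cast (Finset.card_pos.mpr ⟨a, Finset.mem_filter.mpr ⟨ha, hda⟩⟩).ne'
  refine ((tendsto_sum_pow_div_pow_atTop d n hS).div
    (tendsto_sum_pow_div_pow_atTop d n hT) hTn').congr' ?_
  filter_upwards [Filter.eventually_gt_atTop (0 : ℝ)] with ρ hρ
  exact div_div_div_cancel_right₀ (pow_pos hρ n).ne' _ _

end Asymptotics

section IndependentSets

variable {G : SimpleGraph V} [DecidableRel G.Adj] {A : Finset V} {i : V}

theorem mem_indepSets : A ∈ indepSets G ↔ IsIndep G A := by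
  simp [indepSets]

theorem card_le_indepNum (hA : A ∈ indepSets G) : A.card ≤ indepNum G :=
  Finset.le_sup hA

theorem IsIndep.insert_of_mem_backoffSet (hA : IsIndep G A)
    (hi : i ∈ backoffSet G A) : IsIndep G (insert i A) := by
  simp only [backoffSet, Finset.mem_filter, Finset.mem_univ, true_and] at hi
  intro a ha b hb
  rw [Finset.mem_insert] at ha hb
  rcases ha with rfl | ha <;> rcases hb with rfl | hb
  · exact G.irrefl
  · exact hi.2 b hb
  · exact fun hab => hi.2 a ha hab.symm
  · exact hA a ha b hb

theorem notMem_backoffSet_of_mem_maxIndepSets (hA : A ∈ maxIndepSets G) :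
    i ∉ backoffSet G A := by
  intro hi
  obtain ⟨hAind, hAcard⟩ := Finset.mem_filter.mp hA
  have hiA : i ∉ A := (Finset.mem_filter.mp hi).2.1
  have := card_le_indepNum <| mem_indepSets.mpr <|
    (mem_indepSets.mp hAind).insert_of_mem_backoffSet hi
  rw [Finset.card_insert_of_notMem hiA, hAcard] at this
  omega

theorem exists_card_eq_indepNum : ∃ A ∈ indepSets G, A.card = indepNum G := by
  obtain ⟨A, hA, hAsup⟩ := Finset.exists_mem_eq_sup (indepSets G)
    ⟨∅, mem_indepSets.mpr fun _ h => absurd h (Finset.notMem_empty _)⟩ Finset.card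
  exact ⟨A, hA, hAsup.symm⟩

theorem filter_notBlocked_card_eq_indepNum :
    {A ∈ indepSets G | i ∈ A ∪ backoffSet G A ∧ A.card = indepNum G} =
      {A ∈ maxIndepSets G | i ∈ A} := by
  ext A
  simp only [maxIndepSets, Finset.mem_filter, Finset.mem_union]
  constructor
  · rintro ⟨hA, hi | hi, hcard⟩
    · exact ⟨⟨hA, hcard⟩, hi⟩
    · exact absurd hi (notMem_backoffSet_of_mem_maxIndepSets (Finset.mem_filter.mpr ⟨hA, hcard⟩))
  · rintro ⟨⟨hA, hcard⟩, hi⟩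
    exact ⟨hA, Or.inl hi, hcard⟩

end IndependentSets

/-- As `ρ → ∞`, the fraction of time `x_i(ρ)` during which cell `i` is not blocked tends
to `η_i(G)/η(G)`. -/
theorem stmt9 {V : Type*} [Fintype V] [DecidableEq V]
    (G : SimpleGraph V) [DecidableRel G.Adj] (i : V) :
    Filter.Tendsto
      (fun ρ : ℝ =>
        ∑ A ∈ (indepSets G).filter (fun A => i ∈ A ∪ backoffSet G A), piU G ρ A)
      Filter.atTop (nhds ((etaV G i : ℝ) / (eta G : ℝ))) := by
  have hlim := tendsto_sum_pow_div_sum_pow_atTop Finset.card (indepNum G)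
    (S := (indepSets G).filter (fun A => i ∈ A ∪ backoffSet G A)) (T := indepSets G)
    (fun A hA => card_le_indepNum (Finset.mem_filter.mp hA).1) (fun _ => card_le_indepNum)
    exists_card_eq_indepNum
  rw [Finset.filter_filter, filter_notBlocked_card_eq_indepNum] at hlim
  simp only [piU, ← Finset.sum_div]
  exact hlim
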